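/- If a finite point set P in the plane in general position satisfies Necessary Condition 3 (i.e., |P'| - |CH(P')| >= |CH(P)| - max|T_c'|), then P also satisfies Necessary Condition 1 (|P'| >= |CH(P)|) and Necessary Condition 2 (for every set S of consecutive vertices of CH(P), the convex hull of P \ S has at most |P'| + 1 vertices). -/

import Mathlib

open scoped Classical

noncomputable section

/-- Points of the plane. -/
abbrev Pt : Type := ℝ × ℝ

/-- Orientation determinant of two plane vectors. -/
def det2 (u v : Pt) : ℝ := u.1 * v.2 - u.2 * v.1

/-- `P` is in general position: no three distinct points of `P` are collinear. -/
def GenPos (P : Finset Pt) : Prop :=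
  ∀ p ∈ P, ∀ q ∈ P, ∀ r ∈ P, p ≠ q → p ≠ r → q ≠ r → ¬Collinear ℝ ({p, q, r} : Set Pt)

/-- The vertices of the convex hull of `P` (the extreme points of `P`). -/
def hullVx (P : Finset Pt) : Finset Pt :=
  P.filter fun p => p ∉ convexHull ℝ ((P.erase p : Finset Pt) : Set Pt)

/-- The points of `P` lying in the interior of the convex hull of `P`. -/
def intPts (P : Finset Pt) : Finset Pt :=
  P.filter fun p => p ∈ interior (convexHull ℝ (P : Set Pt))

/-- `p` and `q` are consecutive vertices of the convex hull of `P`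
(the segment joining them is an edge of the hull boundary). -/
def HullEdge (P : Finset Pt) (p q : Pt) : Prop :=
  p ∈ hullVx P ∧ q ∈ hullVx P ∧ p ≠ q ∧
    segment ℝ p q ⊆ frontier (convexHull ℝ (P : Set Pt))

/-- A plane graph with vertex set `P`, all of whose edges are straight line
segments: edges may only meet at common endpoints. -/
structure PlaneGraph (P : Finset Pt) where
  Adj : Pt → Pt → Prop
  symm : ∀ {p q}, Adj p q → Adj q p
  mem_left : ∀ {p q}, Adj p q → p ∈ P
  ne : ∀ {p q}, Adj p q → p ≠ q
  noncross : ∀ {p q r s}, Adj p q → Adj r s →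
    (openSegment ℝ p q ∩ openSegment ℝ r s).Nonempty → ({p, q} : Set Pt) = {r, s}

/-- A triangulation of `P`: a plane straight-line graph on `P` that is maximal,
i.e. no further segment between points of `P` can be added without crossing an
existing edge.  (For a finite point set in general position this is equivalent
to: the outer face is the complement of the convex hull and every bounded face
is a triangle.) -/
structure Triangulation (P : Finset Pt) extends PlaneGraph P where
  maximal : ∀ p ∈ P, ∀ q ∈ P, p ≠ q → ¬Adj p q →
    ∃ r s, Adj r s ∧ ({p, q} : Set Pt) ≠ {r, s} ∧
      (openSegment ℝ p q ∩ openSegment ℝ r s).Nonempty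

/-- The abstract graph underlying a plane graph. -/
def PlaneGraph.graph {P : Finset Pt} (G : PlaneGraph P) : SimpleGraph {x // x ∈ P} where
  Adj p q := G.Adj p q
  symm := ⟨fun _ _ h => G.symm h⟩
  loopless := ⟨fun _ h => G.ne h rfl⟩

/-- A graph is `k`-connected if it has at least `k+1` vertices and no set of at
most `k-1` vertices disconnects it (removing fewer than `k` vertices leaves a
connected graph). -/
def KConnected {V : Type*} [Fintype V] (G : SimpleGraph V) (k : ℕ) : Prop :=
  k + 1 ≤ Fintype.card V ∧
    ∀ S : Finset V, S.card < k → (G.induce ((↑S : Set V)ᶜ)).Connected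

/-- A chord of a plane graph on `P`: an edge joining two nonconsecutive
vertices of the convex hull of `P`. -/
def IsChord {P : Finset Pt} (G : PlaneGraph P) (p q : Pt) : Prop :=
  G.Adj p q ∧ p ∈ hullVx P ∧ q ∈ hullVx P ∧ ¬HullEdge P p q

/-- Three points forming a triangle of the graph `G` (pairwise adjacent). -/
def IsTriangleOf {P : Finset Pt} (G : PlaneGraph P) (p q r : Pt) : Prop :=
  G.Adj p q ∧ G.Adj q r ∧ G.Adj p r

/-- A complex triangle of `G`: a triangle formed by three edges of `G` that
contains a point of `P` in its interior and another point of `P` in its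
exterior. -/
def IsComplexTri {P : Finset Pt} (G : PlaneGraph P) (p q r : Pt) : Prop :=
  IsTriangleOf G p q r ∧
    (∃ x ∈ P, x ∈ interior (convexHull ℝ ({p, q, r} : Set Pt))) ∧
    (∃ y ∈ P, y ∉ convexHull ℝ ({p, q, r} : Set Pt))

/-- A triangulation is noncomplex if it has neither chords nor complex
triangles. -/
def Noncomplex {P : Finset Pt} (T : Triangulation P) : Prop :=
  (∀ p q, ¬IsChord T.toPlaneGraph p q) ∧ ∀ p q r, ¬IsComplexTri T.toPlaneGraph p q r

/-- `Q` is anomalous: its convex hull is a triangle and there is a hull vertex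
`p` such that every point of `Q \ {p}` lies on the boundary of the convex hull
of `Q \ {p}`. -/
def Anomalous (Q : Finset Pt) : Prop :=
  (hullVx Q).card = 3 ∧
    ∃ p ∈ hullVx Q, ∀ q ∈ Q.erase p,
      q ∉ interior (convexHull ℝ ((Q.erase p : Finset Pt) : Set Pt))

/-- `s` is a vertex of the convex hull of `P` lying strictly between `pr` and
`pt` in counterclockwise order (i.e. on the open counterclockwise hull arc
from `pr` to `pt`; for a hull traversed counterclockwise these are exactly the
hull vertices strictly on the right of the directed chord `pr → pt`). -/
def CCWBetween (P : Finset Pt) (pr pt s : Pt) : Prop :=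
  s ∈ hullVx P ∧ det2 (pt - pr) (s - pr) < 0

/-- The set `S` of hull vertices strictly between `pr` and `pt`
counterclockwise. -/
def cutSet (P : Finset Pt) (pr pt : Pt) : Finset Pt :=
  P.filter fun s => CCWBetween P pr pt s

/-- An inward triangle of a plane graph `G` on `P`: a triangle of `G` two of
whose vertices `b`, `c` are consecutive hull vertices and whose third vertex
`a` (its inward vertex) is an interior point of the hull. -/
def InwardTri {P : Finset Pt} (G : PlaneGraph P) (b c a : Pt) : Prop :=
  IsTriangleOf G b c a ∧ HullEdge P b c ∧ a ∈ intPts P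

/-- A (geometric) inward triangle of the point set `P`: its base `b c` is an
edge of the hull and its inward vertex `a` is an interior point. -/
def GInwardTri (P : Finset Pt) (b c a : Pt) : Prop :=
  HullEdge P b c ∧ a ∈ intPts P

/-- The triangle `b c a` contains no point of `P` in its interior. -/
def EmptyTri (P : Finset Pt) (b c a : Pt) : Prop :=
  ∀ x ∈ P, x ∉ interior (convexHull ℝ ({b, c, a} : Set Pt))

/-- The inward triangle `b c a` is forbidden: for some hull vertices `pr ≠ pt`,
its base edge lies on the clockwise hull chain from `pr` to `pt` (i.e. `b`, `c`
are not strictly counterclockwise between `pr` and `pt`) while its inward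
vertex lies on the boundary of the convex hull of `Q = P \ S`. -/
def ForbiddenTri (P : Finset Pt) (b c a : Pt) : Prop :=
  ∃ pr ∈ hullVx P, ∃ pt ∈ hullVx P, pr ≠ pt ∧
    b ∉ cutSet P pr pt ∧ c ∉ cutSet P pr pt ∧
    a ∉ interior (convexHull ℝ ((P \ cutSet P pr pt : Finset Pt) : Set Pt))

/-- A triangle, recorded as `(b, c, a)` with base `b c` and inward vertex `a`. -/
abbrev Tri : Type := Pt × Pt × Pt

def triVerts (t : Tri) : Set Pt := {t.1, t.2.1, t.2.2}

def triInterior (t : Tri) : Set Pt := interior (convexHull ℝ (triVerts t))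

/-- A non-forbidden empty inward triangle of `P`. -/
def GoodTri (P : Finset Pt) (t : Tri) : Prop :=
  GInwardTri P t.1 t.2.1 t.2.2 ∧ EmptyTri P t.1 t.2.1 t.2.2 ∧
    ¬ForbiddenTri P t.1 t.2.1 t.2.2

/-- Two triangles share an edge (i.e. share two distinct vertices). -/
def ShareEdge (t₁ t₂ : Tri) : Prop :=
  ∃ u v : Pt, u ≠ v ∧ u ∈ triVerts t₁ ∧ v ∈ triVerts t₁ ∧
    u ∈ triVerts t₂ ∧ v ∈ triVerts t₂

/-- A compatible set of triangles: all its members are non-forbidden empty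
inward triangles, and no two (distinct) members share an edge, an inward
vertex, or an interior point. -/
def Compatible (P : Finset Pt) (Tc : Finset Tri) : Prop :=
  (∀ t ∈ Tc, GoodTri P t) ∧
    ∀ t₁ ∈ Tc, ∀ t₂ ∈ Tc, triVerts t₁ ≠ triVerts t₂ →
      ¬ShareEdge t₁ t₂ ∧ t₁.2.2 ≠ t₂.2.2 ∧ triInterior t₁ ∩ triInterior t₂ = ∅

/-- A maximal compatible set: no inward triangle can be added while keeping it
compatible. -/
def MaxCompatible (P : Finset Pt) (Tc : Finset Tri) : Prop :=
  Compatible P Tc ∧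
    ∀ t : Tri, Compatible P (insert t Tc) → ∃ t' ∈ Tc, triVerts t' = triVerts t

/-- The number of triangles of `Tc` whose inward vertex is a vertex of the
convex hull of `P'` (counted up to the underlying vertex set). -/
def tcPrimeCard (P : Finset Pt) (Tc : Finset Tri) : ℕ :=
  ((Tc.filter fun t => t.2.2 ∈ hullVx (intPts P)).image triVerts).card

/-- `max|T_c'|`: the maximum, over all maximal compatible sets `T_c`, of the
number of triangles of `T_c` whose inward vertex is a hull vertex of `P'`. -/
noncomputable def maxTcPrime (P : Finset Pt) : ℕ :=
  sSup {m | ∃ Tc : Finset Tri, MaxCompatible P Tc ∧ m = tcPrimeCard P Tc}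

/-!
Every triangle of a compatible set is determined by its inward vertex, so
`max|T_c'| ≤ |CH(P')|`, and Necessary Condition 3 gives Necessary Condition 1.

For Condition 2 let `Q = P \ S`. A vertex of `CH(Q)` is either a hull vertex of `P` outside `S`
or, by general position, a vertex of `CH(P')` on the boundary of `CH(Q)`. A triangle of `T_c'`
whose inward vertex lies on that boundary is not forbidden only if its base touches `S`; orienting
the bases counterclockwise, their tails lie in `S ∪ {p_r}` (the one edge entering `S` starts at
`p_r`) and determine the triangle. Hence `max|T_c'|` is at most the number of vertices of `CH(P')`
interior to `CH(Q)` plus `|S| + 1`, and Condition 3 turns this into `|CH(Q)| ≤ |P'| + 1`.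
-/

/-- Twice the signed area of the triangle `a b c`, positive iff `a b c` is counterclockwise. -/
def orient (a b c : Pt) : ℝ := det2 (b - a) (c - a)

lemma orient_rotate (a b c : Pt) : orient b c a = orient a b c := by
  simp only [orient, det2, Prod.fst_sub, Prod.snd_sub]; ring

lemma orient_swap (a b c : Pt) : orient a c b = -orient a b c := by
  simp only [orient, det2, Prod.fst_sub, Prod.snd_sub]; ring

@[simp] lemma orient_self_left (a b : Pt) : orient a b a = 0 := by
  simp only [orient, det2, sub_self, Prod.fst_zero, Prod.snd_zero]; ring

@[simp] lemma orient_self_right (a b : Pt) : orient a b b = 0 := by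
  simp only [orient, det2, Prod.fst_sub, Prod.snd_sub]; ring

lemma orient_lineMap (a b x y : Pt) (t : ℝ) :
    orient a b (AffineMap.lineMap x y t) = (1 - t) * orient a b x + t * orient a b y := by
  simp only [orient, det2, AffineMap.lineMap_apply_module, Prod.fst_sub, Prod.snd_sub,
    Prod.fst_add, Prod.snd_add, Prod.smul_fst, Prod.smul_snd, smul_eq_mul]; ring

lemma orient_combo {a b c : Pt} {α β γ : ℝ} (h : α + β + γ = 1) :
    orient (α • a + β • b + γ • c) b c = α * orient a b c ∧
      orient a (α • a + β • b + γ • c) c = β * orient a b c ∧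
      orient a b (α • a + β • b + γ • c) = γ * orient a b c := by
  obtain rfl : γ = 1 - α - β := by linarith
  refine ⟨?_, ?_, ?_⟩
  all_goals simp only [orient, det2, Prod.fst_sub, Prod.snd_sub, Prod.fst_add, Prod.snd_add,
    Prod.smul_fst, Prod.smul_snd, smul_eq_mul]; ring

/-- Cramer's rule: the orientations are (up to the factor `orient a b c`) the barycentric
coordinates of `x` with respect to `a`, `b`, `c`. -/
lemma orient_smul_eq (a b c x : Pt) :
    orient a b c • x = orient x b c • a + orient a x c • b + orient a b x • c := by
  ext <;> simp only [orient, det2, Prod.fst_sub, Prod.snd_sub, Prod.fst_add, Prod.snd_add,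
    Prod.smul_fst, Prod.smul_snd, smul_eq_mul] <;> ring

lemma orient_add_orient_add_orient (a b c x : Pt) :
    orient x b c + orient a x c + orient a b x = orient a b c := by
  simp only [orient, det2, Prod.fst_sub, Prod.snd_sub]; ring

lemma exists_sub_eq_smul_of_orient_eq_zero {a b x : Pt} (hab : a ≠ b) (h : orient a b x = 0) :
    ∃ t : ℝ, x - a = t • (b - a) := by
  have hu : b - a ≠ 0 := sub_ne_zero.mpr hab.symm
  simp only [orient, det2] at h
  rcases eq_or_ne (b - a).1 0 with h1 | h1
  · have h2 : (b - a).2 ≠ 0 := fun h2 => hu (Prod.ext h1 h2)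
    refine ⟨(x - a).2 / (b - a).2, Prod.ext ?_ ?_⟩ <;> simp only [Prod.smul_fst, Prod.smul_snd,
      smul_eq_mul]
    · field_simp; linarith
    · field_simp
  · refine ⟨(x - a).1 / (b - a).1, Prod.ext ?_ ?_⟩ <;> simp only [Prod.smul_fst, Prod.smul_snd,
      smul_eq_mul]
    · field_simp
    · field_simp; linarith

lemma collinear_of_orient_eq_zero {a b x : Pt} (h : orient a b x = 0) :
    Collinear ℝ ({a, b, x} : Set Pt) := by
  rcases eq_or_ne a b with rfl | hab
  · simpa using collinear_pair ℝ a x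
  obtain ⟨t, ht⟩ := exists_sub_eq_smul_of_orient_eq_zero hab h
  have hx : x = AffineMap.lineMap a b t := by
    rw [AffineMap.lineMap_apply, vsub_eq_sub, vadd_eq_add, ← ht, sub_add_cancel]
  rw [Set.pair_comm b x, Set.insert_comm a x, hx]
  exact collinear_insert_of_mem_affineSpan_pair (AffineMap.lineMap_mem_affineSpan_pair t a b)

lemma GenPos.orient_ne_zero {P : Finset Pt} (hP : GenPos P) {a b c : Pt} (ha : a ∈ P)
    (hb : b ∈ P) (hc : c ∈ P) (hab : a ≠ b) (hac : a ≠ c) (hbc : b ≠ c) : orient a b c ≠ 0 :=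
  fun h => hP a ha b hb c hc hab hac hbc (collinear_of_orient_eq_zero h)

lemma smul_add_smul_add_smul_mem_convexHull {E : Type*} [AddCommGroup E] [Module ℝ E]
    {x y z : E} {α β γ : ℝ} (hα : 0 ≤ α) (hβ : 0 ≤ β) (hγ : 0 ≤ γ) (h : α + β + γ = 1) :
    α • x + β • y + γ • z ∈ convexHull ℝ ({x, y, z} : Set E) := by
  have := (convex_convexHull ℝ ({x, y, z} : Set E)).sum_mem (t := Finset.univ)
    (w := ![α, β, γ]) (z := ![x, y, z]) (by intro i _; fin_cases i <;> simpa)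
    (by simp [Fin.sum_univ_three, h])
    (by intro i _; apply subset_convexHull; fin_cases i <;> simp)
  simpa [Fin.sum_univ_three] using this

lemma mem_convexHull_of_orient_nonneg {a b c x : Pt} (hD : 0 < orient a b c)
    (ha : 0 ≤ orient x b c) (hb : 0 ≤ orient a x c) (hc : 0 ≤ orient a b x) :
    x ∈ convexHull ℝ ({a, b, c} : Set Pt) := by
  have hx : x = (orient x b c / orient a b c) • a + (orient a x c / orient a b c) • b +
      (orient a b x / orient a b c) • c := by
    apply smul_right_injective Pt hD.ne'
    simp only [smul_add, smul_smul, mul_div_cancel₀ _ hD.ne']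
    exact orient_smul_eq a b c x
  rw [hx]
  apply smul_add_smul_add_smul_mem_convexHull (by positivity) (by positivity) (by positivity)
  rw [← add_div, ← add_div, orient_add_orient_add_orient, div_self hD.ne']

lemma mem_interior_convexHull_of_orient_pos {a b c x : Pt} (hD : 0 < orient a b c)
    (ha : 0 < orient x b c) (hb : 0 < orient a x c) (hc : 0 < orient a b x) :
    x ∈ interior (convexHull ℝ ({a, b, c} : Set Pt)) := by
  let U : Set Pt := {y | 0 < orient y b c} ∩ {y | 0 < orient a y c} ∩ {y | 0 < orient a b y}
  have h₁ : Continuous fun y => orient y b c := by unfold orient det2; fun_prop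
  have h₂ : Continuous fun y => orient a y c := by unfold orient det2; fun_prop
  have h₃ : Continuous fun y => orient a b y := by unfold orient det2; fun_prop
  have hU : IsOpen U := ((isOpen_lt continuous_const h₁).inter
    (isOpen_lt continuous_const h₂)).inter (isOpen_lt continuous_const h₃)
  refine interior_maximal (fun y hy => ?_) hU ⟨⟨ha, hb⟩, hc⟩
  exact mem_convexHull_of_orient_nonneg hD hy.1.1.le hy.1.2.le hy.2.le

lemma smul_add_smul_add_smul_mem_interior_convexHull {a b c : Pt} (hD : orient a b c ≠ 0)
    {α β γ : ℝ} (hα : 0 < α) (hβ : 0 < β) (hγ : 0 < γ) (h : α + β + γ = 1) :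
    α • a + β • b + γ • c ∈ interior (convexHull ℝ ({a, b, c} : Set Pt)) := by
  wlog hpos : 0 < orient a b c generalizing b c β γ
  · have hneg : orient a b c < 0 := lt_of_le_of_ne (not_lt.mp hpos) hD
    have h' := this (b := c) (c := b) (by rwa [orient_swap, neg_ne_zero]) hγ hβ (by linarith)
      (by rw [orient_swap]; linarith)
    rwa [Set.pair_comm, add_right_comm] at h'
  obtain ⟨ha, hb, hc⟩ := orient_combo (a := a) (b := b) (c := c) h
  exact mem_interior_convexHull_of_orient_pos hpos (by rw [ha]; positivity)
    (by rw [hb]; positivity) (by rw [hc]; positivity)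

lemma mem_convexHull_erase_of_mem_interior {E : Type*} [NormedAddCommGroup E] [NormedSpace ℝ E]
    [Nontrivial E] [DecidableEq E] (s : Finset E) {p : E}
    (h : p ∈ interior (convexHull ℝ (s : Set E))) : p ∈ convexHull ℝ (s.erase p : Set E) := by
  have hK := s.finite_toSet.isCompact_convexHull (𝕜 := ℝ)
  have hext : (convexHull ℝ (s : Set E)).extremePoints ℝ ⊆ (s.erase p : Set E) := fun x hx =>
    Finset.mem_erase.mpr ⟨fun hxp => Set.disjoint_left.mp (disjoint_interior_extremePoints _)
      (hxp ▸ h) hx, extremePoints_convexHull_subset hx⟩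
  rw [← closure_convexHull_extremePoints hK (convex_convexHull ℝ _)] at h
  exact (closure_minimal (convexHull_mono hext)
    ((s.erase p).finite_toSet.isClosed_convexHull (𝕜 := ℝ))) (interior_subset h)

lemma notMem_intPts_of_mem_hullVx {P : Finset Pt} {p : Pt} (h : p ∈ hullVx P) :
    p ∉ intPts P := fun hi =>
  (Finset.mem_filter.mp h).2 (mem_convexHull_erase_of_mem_interior P (Finset.mem_filter.mp hi).2)

lemma mem_intPts_of_notMem_hullVx {P : Finset Pt} (hP : GenPos P) {p : Pt} (hp : p ∈ P)
    (hnv : p ∉ hullVx P) : p ∈ intPts P := by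
  have hmem : p ∈ convexHull ℝ (P.erase p : Set Pt) := by
    by_contra h
    exact hnv (Finset.mem_filter.mpr ⟨hp, h⟩)
  obtain ⟨ι, _, z, w, hzP, hind, hw0, hw1, hwz⟩ := eq_pos_convex_span_of_mem_convexHull hmem
  have hz : ∀ i, z i ∈ P ∧ z i ≠ p := fun i => by
    simpa [and_comm] using hzP (Set.mem_range_self i)
  have hcard : Fintype.card ι ≤ 3 := by
    have := (hind.card_le_finrank_succ).trans (Nat.add_le_add_right (Submodule.finrank_le _) 1)
    simpa using this
  refine Finset.mem_filter.mpr ⟨hp, ?_⟩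
  interval_cases hn : Fintype.card ι
  · simp [Fintype.card_eq_zero_iff.mp hn] at hw1
  all_goals
    obtain e := (Fintype.equivFinOfCardEq hn).symm
    rw [← e.sum_comp] at hw1 hwz
    have hzP i := (hz (e i)).1
    have hzp i := (hz (e i)).2
    have hzinj := hind.injective.comp e.injective
  · simp only [Fin.sum_univ_one] at hw1 hwz
    exact absurd (by simpa [hw1] using hwz) (hzp 0)
  · simp only [Fin.sum_univ_two] at hw1 hwz
    refine absurd (hP.orient_ne_zero (hzP 0) (hzP 1) hp (hzinj.ne (by decide)) (hzp 0) (hzp 1)) ?_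
    have hline : p = AffineMap.lineMap (z (e 0)) (z (e 1)) (w (e 1)) := by
      rw [AffineMap.lineMap_apply_module, ← hwz, ← hw1, add_sub_cancel_right]
    rw [hline, orient_lineMap]
    simp
  · simp only [Fin.sum_univ_three] at hw1 hwz
    refine interior_mono (convexHull_mono ?_) (hwz ▸ smul_add_smul_add_smul_mem_interior_convexHull
      (hP.orient_ne_zero (hzP 0) (hzP 1) (hzP 2) (hzinj.ne (by decide)) (hzinj.ne (by decide))
      (hzinj.ne (by decide))) (hw0 _) (hw0 _) (hw0 _) hw1)
    simp [Set.insert_subset_iff, hzP]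

/-- `u → w` is an edge of the convex hull of `P` traversed counterclockwise. -/
def IsCCWEdge (P : Finset Pt) (u w : Pt) : Prop :=
  u ∈ P ∧ w ∈ P ∧ u ≠ w ∧ ∀ x ∈ P, 0 ≤ orient u w x

lemma exists_mem_segment_mem_interior_convexHull {P : Finset Pt} (hP : GenPos P) {b c x y : Pt}
    (hb : b ∈ P) (hx : x ∈ P) (hy : y ∈ P) (hbx : b ≠ x) (hby : b ≠ y) (hxy : x ≠ y)
    {β μ : ℝ} (hβ₀ : 0 < β) (hβ₁ : β < 1) (hμ : 0 ≤ μ)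
    (hW : AffineMap.lineMap x y β - b = μ • (c - b)) :
    ∃ m ∈ segment ℝ b c, m ∈ interior (convexHull ℝ (P : Set Pt)) := by
  refine ⟨AffineMap.lineMap b c (μ / (μ + 2)), ?_, ?_⟩
  · exact segment_eq_image_lineMap ℝ b c ▸
      ⟨_, ⟨by positivity, by rw [div_le_one (by positivity)]; linarith⟩, rfl⟩
  have hm : AffineMap.lineMap b c (μ / (μ + 2)) = ((μ + 1) / (μ + 2)) • b +
      ((1 - β) / (μ + 2)) • x + (β / (μ + 2)) • y := by
    rw [AffineMap.lineMap_apply_module'] at hW ⊢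
    rw [div_eq_inv_mul, ← smul_smul, ← hW]
    match_scalars <;> field_simp <;> ring
  rw [hm]
  refine interior_mono (convexHull_mono ?_) (smul_add_smul_add_smul_mem_interior_convexHull
    (hP.orient_ne_zero hb hx hy hbx hby hxy) (by positivity)
    (div_pos (by linarith) (by positivity)) (by positivity) ?_)
  · simp [Set.insert_subset_iff, hb, hx, hy]
  · field_simp; ring

lemma HullEdge.isCCWEdge_or {P : Finset Pt} (hP : GenPos P) {b c : Pt} (he : HullEdge P b c) :
    IsCCWEdge P b c ∨ IsCCWEdge P c b := by
  obtain ⟨hbv, hcv, hbc, hfr⟩ := he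
  have hb := (Finset.mem_filter.mp hbv).1
  have hc := (Finset.mem_filter.mp hcv).1
  by_contra! h
  obtain ⟨x, hx, hox⟩ : ∃ x ∈ P, orient b c x < 0 := by
    simpa [IsCCWEdge, hb, hc, hbc] using h.1
  obtain ⟨y, hy, hoy⟩ : ∃ y ∈ P, orient c b y < 0 := by
    simpa [IsCCWEdge, hb, hc, hbc.symm] using h.2
  rw [← orient_rotate, orient_swap, neg_lt_zero] at hoy
  have hbx : b ≠ x := by rintro rfl; simp at hox
  have hby : b ≠ y := by rintro rfl; simp at hoy
  have hcx : c ≠ x := by rintro rfl; simp at hox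
  have hcy : c ≠ y := by rintro rfl; simp at hoy
  have hxy : x ≠ y := by rintro rfl; linarith
  -- `[x, y]` crosses the line `b c` at `lineMap x y β`; a point of `[b, c]` near it is interior.
  set β := orient b c x / (orient b c x - orient b c y) with hβ
  have hβ₀ : 0 < β := div_pos_of_neg_of_neg hox (by linarith)
  have hβ₁ : β < 1 := (div_lt_one_of_neg (by linarith)).mpr (by linarith)
  have hW : orient b c (AffineMap.lineMap x y β) = 0 := by
    rw [orient_lineMap, hβ]
    field_simp [show orient b c x - orient b c y ≠ 0 by linarith]
    ring
  obtain ⟨μ, hμ⟩ := exists_sub_eq_smul_of_orient_eq_zero hbc hW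
  obtain ⟨m, hm, hmi⟩ : ∃ m ∈ segment ℝ b c, m ∈ interior (convexHull ℝ (P : Set Pt)) := by
    rcases le_or_gt 0 μ with hμ₀ | hμ₀
    · exact exists_mem_segment_mem_interior_convexHull hP hb hx hy hbx hby hxy hβ₀ hβ₁ hμ₀ hμ
    · rw [segment_symm]
      refine exists_mem_segment_mem_interior_convexHull hP hc hx hy hcx hcy hxy hβ₀ hβ₁
        (μ := 1 - μ) (by linarith) ?_
      rw [sub_smul, one_smul, ← neg_sub c b, smul_neg, sub_neg_eq_add, ← hμ]
      abel
  exact (hfr hm).2 hmi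

lemma IsCCWEdge.right_unique {P : Finset Pt} (hP : GenPos P) {u w₁ w₂ : Pt}
    (h₁ : IsCCWEdge P u w₁) (h₂ : IsCCWEdge P u w₂) : w₁ = w₂ := by
  by_contra hne
  have h₁₂ := h₁.2.2.2 w₂ h₂.2.1
  have h₂₁ := h₂.2.2.2 w₁ h₁.2.1
  rw [orient_swap] at h₂₁
  exact hP.orient_ne_zero h₁.1 h₁.2.1 h₂.2.1 h₁.2.2.1 h₂.2.2.1 hne (by linarith)

lemma mem_cutSet {P : Finset Pt} {pr pt q : Pt} :
    q ∈ cutSet P pr pt ↔ q ∈ hullVx P ∧ orient pr pt q < 0 :=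
  ⟨fun h => (Finset.mem_filter.mp h).2,
    fun h => Finset.mem_filter.mpr ⟨(Finset.mem_filter.mp h.1).1, h⟩⟩

lemma cutSet_subset_hullVx (P : Finset Pt) (pr pt : Pt) : cutSet P pr pt ⊆ hullVx P :=
  fun _ hq => (mem_cutSet.mp hq).1

/-- A counterclockwise hull edge entering the cut-off chain `cutSet P pr pt` starts at `pr`. -/
lemma IsCCWEdge.eq_of_orient {P : Finset Pt} {a b pr pt : Pt} (h : IsCCWEdge P a b)
    (hpr : pr ∈ hullVx P) (hpt : pt ∈ P) (ha : 0 ≤ orient pr pt a) (hb : orient pr pt b < 0) :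
    a = pr := by
  by_contra hne
  have hprP := (Finset.mem_filter.mp hpr).1
  have hD : 0 < orient a b pt := by
    have : orient a b pt = orient a b pr + orient pr pt a - orient pr pt b := by
      simp only [orient, det2, Prod.fst_sub, Prod.snd_sub]; ring
    linarith [h.2.2.2 pr hprP]
  have hmem : pr ∈ convexHull ℝ ({a, b, pt} : Set Pt) := by
    refine mem_convexHull_of_orient_nonneg hD ?_ ?_ (h.2.2.2 pr hprP)
    · rw [orient_swap]; linarith
    · rwa [← orient_rotate]
  have hbpr : b ≠ pr := by rintro rfl; simp at hb
  have hptpr : pt ≠ pr := by rintro rfl; simp [orient, det2] at hb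
  refine (Finset.mem_filter.mp hpr).2 (convexHull_mono ?_ hmem)
  simp [Set.insert_subset_iff, hne, hbpr, hptpr, h.1, h.2.1, hpt]

lemma Finset.card_image_le_of_factorsThrough {α β γ : Type*} [DecidableEq β] {F : Finset α}
    {g : α → β} {f : α → γ} {s : Finset γ} (hfs : ∀ t ∈ F, f t ∈ s)
    (hfg : ∀ t₁ ∈ F, ∀ t₂ ∈ F, f t₁ = f t₂ → g t₁ = g t₂) : (F.image g).card ≤ s.card := by
  refine Finset.card_le_card_of_forall_subsingleton (fun v c => ∃ t ∈ F, g t = v ∧ f t = c)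
    (fun v hv => ?_) fun c _ => ?_
  · obtain ⟨t, ht, rfl⟩ := Finset.mem_image.mp hv
    exact ⟨f t, hfs t ht, t, ht, rfl, rfl⟩
  · rintro _ ⟨-, t₁, h₁, rfl, rfl⟩ _ ⟨-, t₂, h₂, rfl, h⟩
    exact hfg t₁ h₁ t₂ h₂ h.symm

lemma hullVx_sdiff_subset {P : Finset Pt} (hP : GenPos P) {S : Finset Pt} (hS : S ⊆ hullVx P) :
    hullVx (P \ S) ⊆ (hullVx P \ S) ∪ (hullVx (intPts P)).filter
      (· ∉ interior (convexHull ℝ ((P \ S : Finset Pt) : Set Pt))) := by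
  intro q hq
  obtain ⟨hqQ, hqv⟩ := Finset.mem_filter.mp hq
  obtain ⟨hqP, hqS⟩ := Finset.mem_sdiff.mp hqQ
  by_cases hqvP : q ∈ hullVx P
  · exact Finset.mem_union_left _ (Finset.mem_sdiff.mpr ⟨hqvP, hqS⟩)
  have hint : intPts P ⊆ P \ S := fun x hx => Finset.mem_sdiff.mpr
    ⟨(Finset.mem_filter.mp hx).1, fun hxS => notMem_intPts_of_mem_hullVx (hS hxS) hx⟩
  refine Finset.mem_union_right _ (Finset.mem_filter.mpr ⟨Finset.mem_filter.mpr
    ⟨mem_intPts_of_notMem_hullVx hP hqP hqvP, fun h => hqv (convexHull_mono ?_ h)⟩,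
    fun h => hqv (mem_convexHull_erase_of_mem_interior _ h)⟩)
  exact_mod_cast Finset.erase_subset_erase q hint

section Compatible

variable {P : Finset Pt} {Tc : Finset Tri}

lemma Compatible.card_image_triVerts_le (hc : Compatible P Tc) {F : Finset Tri} (hF : F ⊆ Tc)
    {s : Finset Pt} (hs : ∀ t ∈ F, t.2.2 ∈ s) : (F.image triVerts).card ≤ s.card :=
  Finset.card_image_le_of_factorsThrough hs fun _ h₁ _ h₂ h => by
    by_contra hne
    exact (hc.2 _ (hF h₁) _ (hF h₂) hne).2.1 h

def ccwBase (P : Finset Pt) (t : Tri) : Pt × Pt :=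
  if IsCCWEdge P t.1 t.2.1 then (t.1, t.2.1) else (t.2.1, t.1)

lemma ccwBase_eq_or (t : Tri) : ccwBase P t = (t.1, t.2.1) ∨ ccwBase P t = (t.2.1, t.1) := by
  unfold ccwBase; split_ifs <;> simp

lemma ccwBase_mem_triVerts (t : Tri) :
    (ccwBase P t).1 ∈ triVerts t ∧ (ccwBase P t).2 ∈ triVerts t := by
  rcases ccwBase_eq_or (P := P) t with h | h <;> simp [h, triVerts]

lemma isCCWEdge_ccwBase (hP : GenPos P) {t : Tri} (he : HullEdge P t.1 t.2.1) :
    IsCCWEdge P (ccwBase P t).1 (ccwBase P t).2 := by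
  unfold ccwBase
  split_ifs with h
  · exact h
  · exact (he.isCCWEdge_or hP).resolve_left h

/-- A non-forbidden triangle whose inward vertex is not interior to `conv (P \ S)` has a base
edge touching `S`; the counterclockwise tails of these edges lie in `S ∪ {pr}`. -/
lemma Compatible.card_image_triVerts_le_card_cutSet (hP : GenPos P) {pr pt : Pt}
    (hpr : pr ∈ hullVx P) (hpt : pt ∈ hullVx P) (hne : pr ≠ pt) (hc : Compatible P Tc)
    {F : Finset Tri} (hF : F ⊆ Tc)
    (hs : ∀ t ∈ F, t.2.2 ∉ interior (convexHull ℝ ((P \ cutSet P pr pt : Finset Pt) : Set Pt))) :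
    (F.image triVerts).card ≤ (cutSet P pr pt).card + 1 := by
  refine (Finset.card_image_le_of_factorsThrough (f := fun t => (ccwBase P t).1)
    (s := insert pr (cutSet P pr pt)) (fun t ht => ?_) fun t₁ h₁ t₂ h₂ h => ?_).trans
    (Finset.card_insert_le _ _)
  · obtain ⟨⟨he, -⟩, -, hnf⟩ := hc.1 t (hF ht)
    have htouch : t.1 ∈ cutSet P pr pt ∨ t.2.1 ∈ cutSet P pr pt := by
      by_contra! h
      exact hnf ⟨pr, hpr, pt, hpt, hne, h.1, h.2, hs t ht⟩
    rw [Finset.mem_insert]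
    by_cases hu : (ccwBase P t).1 ∈ cutSet P pr pt
    · exact Or.inr hu
    have hw : (ccwBase P t).2 ∈ cutSet P pr pt := by
      rcases ccwBase_eq_or (P := P) t with h | h <;> rw [h] at hu ⊢ <;> tauto
    have huv : (ccwBase P t).1 ∈ hullVx P := by
      rcases ccwBase_eq_or (P := P) t with h | h <;> rw [h]
      exacts [he.1, he.2.1]
    refine Or.inl ((isCCWEdge_ccwBase hP he).eq_of_orient hpr (Finset.mem_filter.mp hpt).1
      (not_lt.mp fun hlt => hu (mem_cutSet.mpr ⟨huv, hlt⟩)) (mem_cutSet.mp hw).2)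
  · have hccw₁ := isCCWEdge_ccwBase hP (hc.1 t₁ (hF h₁)).1.1
    have hccw₂ := isCCWEdge_ccwBase hP (hc.1 t₂ (hF h₂)).1.1
    rw [← h] at hccw₂
    have hw := hccw₁.right_unique hP hccw₂
    by_contra hne
    refine (hc.2 _ (hF h₁) _ (hF h₂) hne).1 ⟨_, _, hccw₁.2.2.1, (ccwBase_mem_triVerts t₁).1,
      (ccwBase_mem_triVerts t₁).2, ?_, ?_⟩
    · exact h ▸ (ccwBase_mem_triVerts t₂).1
    · exact hw ▸ (ccwBase_mem_triVerts t₂).2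

lemma tcPrimeCard_le_card_hullVx_intPts (hc : Compatible P Tc) :
    tcPrimeCard P Tc ≤ (hullVx (intPts P)).card :=
  hc.card_image_triVerts_le (Finset.filter_subset _ _) fun _ ht => (Finset.mem_filter.mp ht).2

lemma tcPrimeCard_le_card_add_card_cutSet (hP : GenPos P) {pr pt : Pt} (hpr : pr ∈ hullVx P)
    (hpt : pt ∈ hullVx P) (hne : pr ≠ pt) (hc : Compatible P Tc) :
    tcPrimeCard P Tc ≤ ((hullVx (intPts P)).filter
      (· ∈ interior (convexHull ℝ ((P \ cutSet P pr pt : Finset Pt) : Set Pt)))).card +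
      ((cutSet P pr pt).card + 1) := by
  unfold tcPrimeCard
  set F := Tc.filter fun t => t.2.2 ∈ hullVx (intPts P)
  have hF : F ⊆ Tc := Finset.filter_subset _ _
  rw [← Finset.filter_union_filter_not_eq
    (fun t => t.2.2 ∈ interior (convexHull ℝ ((P \ cutSet P pr pt : Finset Pt) : Set Pt))) F,
    Finset.image_union]
  refine (Finset.card_union_le _ _).trans (add_le_add ?_ ?_)
  · refine hc.card_image_triVerts_le ((Finset.filter_subset _ _).trans hF) fun t ht => ?_
    obtain ⟨htF, hti⟩ := Finset.mem_filter.mp ht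
    exact Finset.mem_filter.mpr ⟨(Finset.mem_filter.mp htF).2, hti⟩
  · exact hc.card_image_triVerts_le_card_cutSet hP hpr hpt hne
      ((Finset.filter_subset _ _).trans hF) fun t ht => (Finset.mem_filter.mp ht).2

end Compatible

lemma maxTcPrime_le {P : Finset Pt} {n : ℕ}
    (h : ∀ Tc, MaxCompatible P Tc → tcPrimeCard P Tc ≤ n) : maxTcPrime P ≤ n :=
  csSup_le' fun _ ⟨Tc, hTc, hm⟩ => hm ▸ h Tc hTc

/-- Necessary Condition 3 implies Necessary Conditions 1 and 2. -/
theorem nc_three_implies_nc_one_and_two (P : Finset Pt) (hgp : GenPos P)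
    (h3 : ((intPts P).card : ℤ) - ((hullVx (intPts P)).card : ℤ) ≥
      ((hullVx P).card : ℤ) - (maxTcPrime P : ℤ)) :
    (hullVx P).card ≤ (intPts P).card ∧
      ∀ pr ∈ hullVx P, ∀ pt ∈ hullVx P, pr ≠ pt →
        (hullVx (P \ cutSet P pr pt)).card ≤ (intPts P).card + 1 := by
  refine ⟨?_, fun pr hpr pt hpt hne => ?_⟩
  · have := maxTcPrime_le (P := P) fun Tc hTc => tcPrimeCard_le_card_hullVx_intPts hTc.1
    omega
  · have hM := maxTcPrime_le (P := P) fun Tc hTc =>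
      tcPrimeCard_le_card_add_card_cutSet hgp hpr hpt hne hTc.1
    have hS := cutSet_subset_hullVx P pr pt
    have hQ := (Finset.card_le_card (hullVx_sdiff_subset hgp hS)).trans (Finset.card_union_le _ _)
    have hsplit := Finset.card_filter_add_card_filter_not (s := hullVx (intPts P))
      (· ∈ interior (convexHull ℝ ((P \ cutSet P pr pt : Finset Pt) : Set Pt)))
    have hsdiff := Finset.card_sdiff_add_card_eq_card hS
    omega
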